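/- arXiv:1412.7066 — 4 statements merged into one kernel-verified Lean document; each statement's English description precedes it below -/
import Mathlib

section
/- Let 1 → A →ι B →π C → 1 be a short exact sequence of topological G-modules (ι a homeomorphic embedding onto ker π). Then the sequence of pointed sets 1 → H⁰(G,A) → H⁰(G,B) → H⁰(G,C) →δ⁰ H¹(G,A) → H¹(G,B) → H¹(G,C) is exact, where δ⁰(c) is the class of g ↦ b⁻¹(g·b) for any b with π(b) = c. -/
/-! Every exactness claim is a diagram chase with the coboundaries `g ↦ b⁻¹ * g • b`. The only
step with topological content is at `H¹(G,B)`: if `π ∘ β` is the coboundary of `π b`, then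
twisting `β` by `b` gives a continuous derivation with values in `ker π = ι(A)`, and since `ι` is
an embedding its pull-back to `A` is again continuous. -/

def IsContDeriv {G A : Type*} [Group G] [TopologicalSpace G] [Group A] [TopologicalSpace A]
    [MulDistribMulAction G A] (α : G → A) : Prop :=
  Continuous α ∧ ∀ g h : G, α (g * h) = α g * g • α h

def Cohom {G A : Type*} [Group G] [Group A] [MulDistribMulAction G A] (α β : G → A) : Prop :=
  ∃ a : A, ∀ g : G, β g = a⁻¹ * α g * g • a

def coboundary {G B : Type*} [Group G] [Group B] [MulDistribMulAction G B] (b : B) (g : G) : B :=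
  b⁻¹ * g • b

section Coboundary

variable {G A B : Type*} [Group G] [Group A] [Group B]
  [MulDistribMulAction G A] [MulDistribMulAction G B]

theorem coboundary_eq_one_iff {b : B} {g : G} : coboundary b g = 1 ↔ g • b = b := by
  rw [coboundary, inv_mul_eq_one, eq_comm]

theorem coboundary_eq_coboundary_iff {b x : B} {g : G} :
    coboundary b g = coboundary x g ↔ g • (b * x⁻¹) = b * x⁻¹ := by
  rw [coboundary, coboundary, smul_mul', smul_inv', inv_mul_eq_iff_eq_mul,
    mul_inv_eq_iff_eq_mul, mul_assoc]

theorem coboundary_mul (b x : B) (g : G) :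
    coboundary (b * x) g = x⁻¹ * coboundary b g * g • x := by
  simp only [coboundary, smul_mul', mul_inv_rev, mul_assoc]

theorem map_coboundary (f : A →* B) (hf : ∀ (g : G) (a : A), f (g • a) = g • f a)
    (a : A) (g : G) : f (coboundary a g) = coboundary (f a) g := by
  rw [coboundary, coboundary, map_mul, map_inv, hf]

theorem map_inv_mul_mul_smul (f : A →* B) (hf : ∀ (g : G) (a : A), f (g • a) = g • f a)
    (a x : A) (g : G) : f (a⁻¹ * x * g • a) = (f a)⁻¹ * f x * g • f a := by
  rw [map_mul, map_mul, map_inv, hf]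

end Coboundary

section Derivation

variable {G A B : Type*} [Group G] [TopologicalSpace G] [Group A] [TopologicalSpace A]
  [Group B] [TopologicalSpace B] [MulDistribMulAction G A] [MulDistribMulAction G B]

theorem IsContDeriv.inv_mul_mul_smul [ContinuousMul B] [ContinuousSMul G B] {β : G → B}
    (hβ : IsContDeriv β) (b : B) : IsContDeriv fun g => b⁻¹ * β g * g • b := by
  refine ⟨(continuous_const.mul hβ.1).mul (continuous_id.smul continuous_const), fun g h => ?_⟩
  simp only [hβ.2 g h, smul_mul', smul_inv', mul_smul]
  group

theorem IsContDeriv.exists_lift {ι : A →* B} (hι : Topology.IsEmbedding ι)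
    (hιeq : ∀ (g : G) (a : A), ι (g • a) = g • ι a) {β : G → B} (hβ : IsContDeriv β)
    (hβι : ∀ g, β g ∈ Set.range ι) : ∃ α : G → A, IsContDeriv α ∧ ∀ g, ι (α g) = β g := by
  choose α hα using hβι
  refine ⟨α, ⟨?_, fun g h => hι.injective ?_⟩, hα⟩
  · rw [hι.continuous_iff]
    exact hβ.1.congr fun g => (hα g).symm
  · rw [map_mul, hιeq, hα, hα, hα, hβ.2]

end Derivation

theorem six_term_exact_sequence_general {G A B C : Type*}
    [Group G] [TopologicalSpace G]
    [Group A] [TopologicalSpace A] [MulDistribMulAction G A]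
    [Group B] [TopologicalSpace B] [IsTopologicalGroup B] [MulDistribMulAction G B]
    [ContinuousSMul G B]
    [Group C] [MulDistribMulAction G C]
    (ι : A →* B) (hιemb : Topology.IsEmbedding ι)
    (hιeq : ∀ (g : G) (a : A), ι (g • a) = g • ι a)
    (π : B →* C) (hπeq : ∀ (g : G) (b : B), π (g • b) = g • π b)
    (hπsurj : Function.Surjective π)
    (hexact : ∀ b : B, π b = 1 ↔ b ∈ Set.range ι) :
    -- exactness at H⁰(G,A)
    (∀ a : A, (∀ g : G, g • a = a) → ι a = 1 → a = 1) ∧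
    -- exactness at H⁰(G,B)
    (∀ b : B, (∀ g : G, g • b = b) →
      (π b = 1 ↔ ∃ a : A, (∀ g : G, g • a = a) ∧ ι a = b)) ∧
    -- exactness at H⁰(G,C): δ⁰(c) is trivial in H¹(G,A) iff c comes from H⁰(G,B)
    (∀ c : C, (∀ g : G, g • c = c) → ∀ b : B, π b = c →
      ((∃ a : A, ∀ g : G, b⁻¹ * g • b = (ι a)⁻¹ * g • ι a) ↔
        ∃ b' : B, (∀ g : G, g • b' = b') ∧ π b' = c)) ∧
    -- exactness at H¹(G,A): ι∘α is trivial in H¹(G,B) iff α is in the image of δ⁰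
    (∀ α : G → A, IsContDeriv α →
      ((∃ b : B, ∀ g : G, ι (α g) = b⁻¹ * g • b) ↔
        ∃ c : C, (∀ g : G, g • c = c) ∧ ∃ b : B, π b = c ∧
          ∃ a : A, ∀ g : G, ι (α g) = (ι a)⁻¹ * (b⁻¹ * g • b) * g • ι a)) ∧
    -- exactness at H¹(G,B): π∘β is trivial in H¹(G,C) iff β comes from H¹(G,A)
    (∀ β : G → B, IsContDeriv β →
      ((∃ c : C, ∀ g : G, π (β g) = c⁻¹ * g • c) ↔
        ∃ α : G → A, IsContDeriv α ∧ Cohom (fun g => ι (α g)) β)) := by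
  have hinj : Function.Injective ι := hιemb.injective
  have hπι : ∀ a : A, π (ι a) = 1 := fun a => (hexact (ι a)).mpr ⟨a, rfl⟩
  refine ⟨fun a _ h => (map_eq_one_iff ι hinj).mp h, fun b hb => ⟨fun h => ?_, ?_⟩,
    fun c _ b hbc => ⟨?_, ?_⟩, fun α _ => ⟨?_, ?_⟩, fun β hβ => ⟨?_, ?_⟩⟩
  · obtain ⟨a, rfl⟩ := (hexact b).mp h
    exact ⟨a, fun g => hinj (by rw [hιeq, hb]), rfl⟩
  · rintro ⟨a, _, rfl⟩
    exact hπι a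
  · rintro ⟨a, ha⟩
    exact ⟨b * (ι a)⁻¹, fun g => coboundary_eq_coboundary_iff.mp (ha g), by simp [hπι, hbc]⟩
  · rintro ⟨b', hb', rfl⟩
    obtain ⟨a, ha⟩ := (hexact (b'⁻¹ * b)).mp (by simp [hbc])
    refine ⟨a, fun g => coboundary_eq_coboundary_iff.mpr ?_⟩
    rw [ha, mul_inv_rev, inv_inv, mul_inv_cancel_left, hb']
  · rintro ⟨b, hb⟩
    refine ⟨π b, fun g => ?_, b, rfl, 1, fun g => by simp [hb g]⟩
    rw [← coboundary_eq_one_iff, ← map_coboundary π hπeq, coboundary, ← hb, hπι]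
  · rintro ⟨-, -, b, -, a, ha⟩
    exact ⟨b * ι a, fun g => (ha g).trans (coboundary_mul b (ι a) g).symm⟩
  · rintro ⟨c, hc⟩
    obtain ⟨b, rfl⟩ := hπsurj c
    have hker : ∀ g, (b⁻¹)⁻¹ * β g * g • b⁻¹ ∈ Set.range ι := fun g => (hexact _).mp <| by
      rw [map_inv_mul_mul_smul π hπeq, hc, map_inv, smul_inv']
      group
    obtain ⟨α, hα, hια⟩ := (hβ.inv_mul_mul_smul b⁻¹).exists_lift hιemb hιeq hker
    exact ⟨α, hα, b, fun g => by simp only [hια, smul_inv']; group⟩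
  · rintro ⟨α, -, b, hb⟩
    exact ⟨π b, fun g => by rw [hb g, map_inv_mul_mul_smul π hπeq, hπι, mul_one]⟩

/-- The six-term exact sequence of pointed sets
`1 → H⁰(G,A) → H⁰(G,B) → H⁰(G,C) →δ⁰ H¹(G,A) → H¹(G,B) → H¹(G,C)`
attached to a short exact sequence `1 → A →ι B →π C → 1` of topological `G`-modules,
where `ι` is a homeomorphic embedding onto `ker π`.  The five conjuncts express
exactness at `H⁰(G,A)`, `H⁰(G,B)`, `H⁰(G,C)`, `H¹(G,A)` and `H¹(G,B)` respectively
(derivations with values in `A` are expressed through their images under `ι`). -/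
theorem six_term_exact_sequence {G A B C : Type*}
    [Group G] [TopologicalSpace G] [IsTopologicalGroup G]
    [Group A] [TopologicalSpace A] [IsTopologicalGroup A] [MulDistribMulAction G A]
    [ContinuousSMul G A]
    [Group B] [TopologicalSpace B] [IsTopologicalGroup B] [MulDistribMulAction G B]
    [ContinuousSMul G B]
    [Group C] [TopologicalSpace C] [IsTopologicalGroup C] [MulDistribMulAction G C]
    [ContinuousSMul G C]
    (ι : A →* B) (hιc : Continuous ι) (hιemb : Topology.IsEmbedding ι)
    (hιeq : ∀ (g : G) (a : A), ι (g • a) = g • ι a)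
    (π : B →* C) (hπc : Continuous π) (hπeq : ∀ (g : G) (b : B), π (g • b) = g • π b)
    (hπsurj : Function.Surjective π)
    (hexact : ∀ b : B, π b = 1 ↔ b ∈ Set.range ι) :
    -- exactness at H⁰(G,A)
    (∀ a : A, (∀ g : G, g • a = a) → ι a = 1 → a = 1) ∧
    -- exactness at H⁰(G,B)
    (∀ b : B, (∀ g : G, g • b = b) →
      (π b = 1 ↔ ∃ a : A, (∀ g : G, g • a = a) ∧ ι a = b)) ∧
    -- exactness at H⁰(G,C): δ⁰(c) is trivial in H¹(G,A) iff c comes from H⁰(G,B)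
    (∀ c : C, (∀ g : G, g • c = c) → ∀ b : B, π b = c →
      ((∃ a : A, ∀ g : G, b⁻¹ * g • b = (ι a)⁻¹ * g • ι a) ↔
        ∃ b' : B, (∀ g : G, g • b' = b') ∧ π b' = c)) ∧
    -- exactness at H¹(G,A): ι∘α is trivial in H¹(G,B) iff α is in the image of δ⁰
    (∀ α : G → A, IsContDeriv α →
      ((∃ b : B, ∀ g : G, ι (α g) = b⁻¹ * g • b) ↔
        ∃ c : C, (∀ g : G, g • c = c) ∧ ∃ b : B, π b = c ∧
          ∃ a : A, ∀ g : G, ι (α g) = (ι a)⁻¹ * (b⁻¹ * g • b) * g • ι a)) ∧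
    -- exactness at H¹(G,B): π∘β is trivial in H¹(G,C) iff β comes from H¹(G,A)
    (∀ β : G → B, IsContDeriv β →
      ((∃ c : C, ∀ g : G, π (β g) = c⁻¹ * g • c) ↔
        ∃ α : G → A, IsContDeriv α ∧ Cohom (fun g => ι (α g)) β)) :=
  six_term_exact_sequence_general ι hιemb hιeq π hπeq hπsurj hexact
end

section
/- Exactness at H¹(G,B): for a short exact sequence 1 → A → B → C → 1 of topological G-modules with A identified with ker π ⊆ B, a continuous derivation β : G → B has π∘β cohomologous to the trivial derivation in H¹(G,C) if and only if β is cohomologous to a continuous derivation taking values in A. -/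
/-!
If `π (β g) = c⁻¹ * g • c`, lift `c⁻¹` to some `a ∈ B`; twisting `β` by the coboundary of `a`
gives a cohomologous continuous derivation that `π` kills. Conversely, applying `π` to a relation
`β' ∼ β` with `π ∘ β' = 1` exhibits `π ∘ β` as a coboundary.
-/

section Cohom

variable {G A B : Type*} [Group G] [Group A] [MulDistribMulAction G A]

theorem cohom_mul_smul (α : G → A) (a : A) : Cohom α (fun g => a⁻¹ * α g * g • a) :=
  ⟨a, fun _ => rfl⟩

theorem Cohom.symm {α β : G → A} (h : Cohom α β) : Cohom β α := by
  obtain ⟨a, ha⟩ := h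
  refine ⟨a⁻¹, fun g => ?_⟩
  rw [ha g, smul_inv', inv_inv]
  group

theorem Cohom.map [Group B] [MulDistribMulAction G B] {α β : G → A} (h : Cohom α β)
    (f : A →* B) (hf : ∀ (g : G) (a : A), f (g • a) = g • f a) : Cohom (f ∘ α) (f ∘ β) := by
  obtain ⟨a, ha⟩ := h
  exact ⟨f a, fun g => by simp only [Function.comp_apply, ha g, map_mul, map_inv, hf]⟩

theorem IsContDeriv.mul_smul [TopologicalSpace G] [TopologicalSpace A] [ContinuousMul A]
    [ContinuousSMul G A] {α : G → A} (hα : IsContDeriv α) (a : A) :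
    IsContDeriv (fun g => a⁻¹ * α g * g • a) := by
  refine ⟨(continuous_const.mul hα.1).mul (continuous_id.smul continuous_const), fun g h => ?_⟩
  simp only [hα.2 g h, smul_mul', smul_inv', smul_smul]
  group

end Cohom

theorem exact_at_H1B_general {G B C : Type*}
    [Group G] [TopologicalSpace G]
    [Group B] [TopologicalSpace B] [IsTopologicalGroup B] [MulDistribMulAction G B]
    [ContinuousSMul G B]
    [Group C] [MulDistribMulAction G C]
    (π : B →* C) (hπeq : ∀ (g : G) (b : B), π (g • b) = g • π b)
    (hπsurj : Function.Surjective π)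
    (β : G → B) (hβ : IsContDeriv β) :
    (∃ c : C, ∀ g : G, π (β g) = c⁻¹ * g • c) ↔
      ∃ β' : G → B, IsContDeriv β' ∧ (∀ g : G, π (β' g) = 1) ∧ Cohom β β' := by
  constructor
  · rintro ⟨c, hc⟩
    obtain ⟨a, ha⟩ := hπsurj c⁻¹
    refine ⟨_, hβ.mul_smul a, fun g => ?_, cohom_mul_smul β a⟩
    simp only [map_mul, map_inv, hπeq, ha, hc g, smul_inv']
    group
  · rintro ⟨β', -, hker, hcohom⟩
    obtain ⟨c, hc⟩ := (hcohom.map π hπeq).symm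
    exact ⟨c, fun g => by simpa [hker] using hc g⟩

/-- Exactness at `H¹(G,B)`: for a short exact sequence `1 → A → B →π C → 1` of
topological `G`-modules (`A = ker π`), a continuous derivation `β : G → B` has
`π ∘ β` cohomologous to the trivial derivation in `H¹(G,C)` iff `β` is cohomologous
to a continuous derivation taking values in `A = ker π`. -/
theorem exact_at_H1B {G B C : Type*}
    [Group G] [TopologicalSpace G] [IsTopologicalGroup G]
    [Group B] [TopologicalSpace B] [IsTopologicalGroup B] [MulDistribMulAction G B]
    [ContinuousSMul G B]
    [Group C] [TopologicalSpace C] [IsTopologicalGroup C] [MulDistribMulAction G C]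
    [ContinuousSMul G C]
    (π : B →* C) (hπc : Continuous π) (hπeq : ∀ (g : G) (b : B), π (g • b) = g • π b)
    (hπsurj : Function.Surjective π)
    (β : G → B) (hβ : IsContDeriv β) :
    (∃ c : C, ∀ g : G, π (β g) = c⁻¹ * g • c) ↔
      ∃ β' : G → B, IsContDeriv β' ∧ (∀ g : G, π (β' g) = 1) ∧ Cohom β β' :=
  exact_at_H1B_general π hπeq hπsurj β hβ
end

section
/- Let 0 → A → B →π C → 1 be a central short exact sequence of topological G-modules (A ⊆ Z(B)) and let s : C → B be a continuous section of π. For a continuous derivation α : G → C, the map δ¹(α)(g,h) = s(α(g))·(g·s(α(h)))·s(α(gh))⁻¹ takes values in A and is a continuous 2-cocycle: (g·δ¹(α)(h,k))·δ¹(α)(g,hk) = δ¹(α)(gh,k)·δ¹(α)(g,h) for all g,h,k ∈ G. -/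
/-- The connecting 2-cochain `δ¹(α)(g,h) = s(α g) * (g • s(α h)) * s(α (g*h))⁻¹`. -/
def delta1 {G B C : Type*} [Group G] [Group B] [Group C] [MulDistribMulAction G B]
    (s : C → B) (α : G → C) : G → G → B :=
  fun g h => s (α g) * g • s (α h) * (s (α (g * h)))⁻¹

/-!
Write `f = s ∘ α`. Since `π ∘ f = α` is a crossed homomorphism, `δ¹(α)(g,h)` lies in `ker π`,
hence in the center of `B`. The defining relation `δ¹(α)(g,h) · f(gh) = f(g) · (g • f(h))`
shows that both sides of the cocycle identity, multiplied on the right by `f(ghk)`, equal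
`f(g) · (g • f(h)) · (gh • f(k))`; centrality is what lets the `δ¹` factors move past `f(g)`.
-/

theorem smul_mem_center {G B : Type*} [Group G] [Monoid B] [MulDistribMulAction G B]
    (g : G) {z : B} (hz : z ∈ Set.center B) : g • z ∈ Set.center B :=
  MulEquivClass.apply_mem_center (MulDistribMulAction.toMulEquiv B g) hz

section delta1

variable {G B C : Type*} [Group G] [Group B] [Group C] [MulDistribMulAction G B]
  (s : C → B) (α : G → C)

theorem delta1_mul (g h : G) : delta1 s α g h * s (α (g * h)) = s (α g) * g • s (α h) :=
  inv_mul_cancel_right _ _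

theorem smul_delta1_mul_delta1 (hcen : ∀ g h, delta1 s α g h ∈ Set.center B) (g h k : G) :
    g • delta1 s α h k * delta1 s α g (h * k) = delta1 s α (g * h) k * delta1 s α g h := by
  apply mul_right_cancel (b := s (α (g * h * k)))
  calc g • delta1 s α h k * delta1 s α g (h * k) * s (α (g * h * k))
      = s (α g) * g • (delta1 s α h k * s (α (h * k))) := by
        rw [mul_assoc, mul_assoc g h k, delta1_mul, ← mul_assoc,
          ((smul_mem_center g (hcen h k)).comm (s (α g))).eq, mul_assoc, smul_mul']
    _ = s (α g) * g • s (α h) * (g * h) • s (α k) := by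
        rw [delta1_mul, smul_mul', smul_smul, mul_assoc]
    _ = delta1 s α g h * (delta1 s α (g * h) k * s (α (g * h * k))) := by
        rw [delta1_mul, ← mul_assoc, delta1_mul]
    _ = delta1 s α (g * h) k * delta1 s α g h * s (α (g * h * k)) := by
        rw [← mul_assoc, ((hcen g h).comm _).eq]

end delta1

theorem map_delta1_eq_one {G B C : Type*} [Group G] [Group B] [Group C] [MulDistribMulAction G B]
    [MulDistribMulAction G C] (π : B →* C) (hπeq : ∀ (g : G) (b : B), π (g • b) = g • π b)
    (s : C → B) (hs : ∀ c : C, π (s c) = c) (α : G → C)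
    (hα : ∀ g h : G, α (g * h) = α g * g • α h) (g h : G) : π (delta1 s α g h) = 1 := by
  simp only [delta1, map_mul, map_inv, hπeq, hs, hα g h]
  group

theorem continuous_delta1 {G B C : Type*} [Group G] [TopologicalSpace G] [ContinuousMul G]
    [Group B] [TopologicalSpace B] [IsTopologicalGroup B] [MulDistribMulAction G B]
    [ContinuousSMul G B] [Group C] [TopologicalSpace C] {s : C → B} (hs : Continuous s)
    {α : G → C} (hα : Continuous α) : Continuous (fun p : G × G => delta1 s α p.1 p.2) := by
  unfold delta1
  fun_prop

theorem delta_one_is_cocycle_general {G B C : Type*}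
    [Group G] [TopologicalSpace G] [IsTopologicalGroup G]
    [Group B] [TopologicalSpace B] [IsTopologicalGroup B] [MulDistribMulAction G B]
    [ContinuousSMul G B]
    [Group C] [TopologicalSpace C] [MulDistribMulAction G C]
    (π : B →* C) (hπeq : ∀ (g : G) (b : B), π (g • b) = g • π b)
    (hcentral : ∀ b : B, π b = 1 → ∀ x : B, b * x = x * b)
    (s : C → B) (hsc : Continuous s) (hs : ∀ c : C, π (s c) = c)
    (α : G → C) (hα : IsContDeriv α) :
    (∀ g h : G, π (delta1 s α g h) = 1) ∧
      Continuous (fun p : G × G => delta1 s α p.1 p.2) ∧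
      ∀ g h k : G,
        g • delta1 s α h k * delta1 s α g (h * k) =
          delta1 s α (g * h) k * delta1 s α g h := by
  have hker := map_delta1_eq_one π hπeq s hs α hα.2
  have hcen : ∀ g h, delta1 s α g h ∈ Set.center B := fun g h =>
    Semigroup.mem_center_iff.mpr fun x => (hcentral _ (hker g h) x).symm
  exact ⟨hker, continuous_delta1 hsc hα.1, smul_delta1_mul_delta1 s α hcen⟩

/-- For a central extension `0 → A → B →π C → 1` of topological `G`-modules with a
continuous section `s` of `π`, and a continuous derivation `α : G → C`, the map
`δ¹(α)` takes values in `A = ker π` and is a continuous 2-cocycle. -/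
theorem delta_one_is_cocycle {G B C : Type*}
    [Group G] [TopologicalSpace G] [IsTopologicalGroup G]
    [Group B] [TopologicalSpace B] [IsTopologicalGroup B] [MulDistribMulAction G B]
    [ContinuousSMul G B]
    [Group C] [TopologicalSpace C] [IsTopologicalGroup C] [MulDistribMulAction G C]
    [ContinuousSMul G C]
    (π : B →* C) (hπc : Continuous π) (hπeq : ∀ (g : G) (b : B), π (g • b) = g • π b)
    (hπsurj : Function.Surjective π)
    (hcentral : ∀ b : B, π b = 1 → ∀ x : B, b * x = x * b)
    (s : C → B) (hsc : Continuous s) (hs : ∀ c : C, π (s c) = c)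
    (α : G → C) (hα : IsContDeriv α) :
    (∀ g h : G, π (delta1 s α g h) = 1) ∧
      Continuous (fun p : G × G => delta1 s α p.1 p.2) ∧
      ∀ g h k : G,
        g • delta1 s α h k * delta1 s α g (h * k) =
          delta1 s α (g * h) k * delta1 s α g h :=
  delta_one_is_cocycle_general π hπeq hcentral s hsc hs α hα
end

section
/- Let N be a normal subgroup of a topological group G and A a topological G-module. Then the sequence 1 → H¹(G/N, A^N) →Inf¹ H¹(G,A) →Res¹ H¹(N,A) is exact: Inf¹ is injective, and ker Res¹ = Im Inf¹. -/
/-- A derivation on `G ⧸ N` with values in the `N`-fixed points `A^N`, described through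
its lift: `ᾱ : G ⧸ N → A` is continuous, satisfies the derivation identity on cosets, and
takes values fixed by `N`. -/
def IsQuotDeriv {G A : Type*} [Group G] [TopologicalSpace G] [Group A] [TopologicalSpace A]
    [MulDistribMulAction G A] (N : Subgroup G) [N.Normal] (ᾱ : G ⧸ N → A) : Prop :=
  Continuous ᾱ ∧
    (∀ g h : G, ᾱ ((g * h : G) : G ⧸ N) = ᾱ ((g : G ⧸ N)) * g • ᾱ ((h : G ⧸ N))) ∧
    ∀ q : G ⧸ N, ∀ n ∈ N, n • ᾱ q = ᾱ q

/-!
Injectivity: on `N` both inflated derivations are trivial, so the coboundary relation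
`β' = a⁻¹ · ᾱ · g•a` restricted to `N` says exactly that `a` is `N`-fixed.
Exactness in the middle: if `α n = a⁻¹ · n•a` on `N`, the cohomologous derivation
`g ↦ a · α g · g•a⁻¹` is trivial on `N`. A derivation `β` trivial on `N` satisfies
`β (g n) = β g`, so it descends to `G ⧸ N`, and its values are `N`-fixed because
`n • β g = β (n g) = β (g · g⁻¹ n g) = β g` by normality.
-/

section Algebra

variable {G A : Type*} [Group G] [Group A] [MulDistribMulAction G A]

def IsDeriv (α : G → A) : Prop :=
  ∀ g h : G, α (g * h) = α g * g • α h

namespace IsDeriv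

variable {α : G → A} (hα : IsDeriv α)
include hα

theorem map_one : α 1 = 1 := by
  simpa using hα 1 1

theorem twist (a : A) : IsDeriv fun g => a * α g * g • a⁻¹ := by
  intro g h
  simp only [hα g h, smul_mul', mul_smul, smul_inv']
  group

theorem map_mul_of_mem {N : Subgroup G} (hN : ∀ n ∈ N, α n = 1) (g : G) {n : G}
    (hn : n ∈ N) : α (g * n) = α g := by
  rw [hα, hN n hn, smul_one, mul_one]

theorem smul_of_mem {N : Subgroup G} [N.Normal] (hN : ∀ n ∈ N, α n = 1) (g : G) {n : G}
    (hn : n ∈ N) : n • α g = α g := by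
  have hconj : g⁻¹ * n * g ∈ N := by simpa using Subgroup.Normal.conj_mem ‹_› n hn g⁻¹
  calc n • α g = α (n * g) := by rw [hα, hN n hn, one_mul]
    _ = α (g * (g⁻¹ * n * g)) := by group
    _ = α g := hα.map_mul_of_mem hN g hconj

end IsDeriv

theorem cohom_twist (α : G → A) (a : A) : Cohom (fun g => a * α g * g • a⁻¹) α :=
  ⟨a, fun g => by simp only [smul_inv']; group⟩

end Algebra

section Topology

variable {G A : Type*} [Group G] [TopologicalSpace G] [Group A] [TopologicalSpace A]
  [MulDistribMulAction G A]

theorem IsContDeriv.isDeriv {α : G → A} (hα : IsContDeriv α) : IsDeriv α :=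
  hα.2

theorem IsQuotDeriv.map_of_mem {N : Subgroup G} [N.Normal] {ᾱ : G ⧸ N → A}
    (hᾱ : IsQuotDeriv N ᾱ) {n : G} (hn : n ∈ N) : ᾱ n = 1 := by
  rw [(QuotientGroup.eq_one_iff n).mpr hn, ← QuotientGroup.mk_one]
  exact IsDeriv.map_one (α := fun g : G => ᾱ g) hᾱ.2.1

theorem IsContDeriv.twist [ContinuousMul A] [ContinuousSMul G A] {α : G → A}
    (hα : IsContDeriv α) (a : A) : IsContDeriv fun g => a * α g * g • a⁻¹ :=
  ⟨(continuous_const.mul hα.1).mul (continuous_id.smul continuous_const),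
    hα.isDeriv.twist a⟩

theorem exists_isQuotDeriv_of_eq_one {N : Subgroup G} [N.Normal] {β : G → A}
    (hβ : IsContDeriv β) (hN : ∀ n ∈ N, β n = 1) :
    ∃ ᾱ : G ⧸ N → A, IsQuotDeriv N ᾱ ∧ ∀ g : G, ᾱ g = β g := by
  have hwd (g h : G) (hgh : QuotientGroup.leftRel N g h) : β g = β h := by
    rw [← hβ.isDeriv.map_mul_of_mem hN g (QuotientGroup.leftRel_apply.mp hgh),
      mul_inv_cancel_left]
  refine ⟨Quotient.lift β hwd, ⟨hβ.1.quotient_lift hwd, hβ.2, ?_⟩, fun _ => rfl⟩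
  rintro ⟨g⟩ n hn
  exact hβ.isDeriv.smul_of_mem hN g hn

end Topology

theorem inflation_restriction_exact_general {G A : Type*}
    [Group G] [TopologicalSpace G]
    [Group A] [TopologicalSpace A] [IsTopologicalGroup A]
    [MulDistribMulAction G A] [ContinuousSMul G A]
    (N : Subgroup G) [N.Normal] :
    -- injectivity of Inf¹
    (∀ ᾱ β' : G ⧸ N → A, IsQuotDeriv N ᾱ → IsQuotDeriv N β' →
      Cohom (fun g : G => ᾱ (g : G ⧸ N)) (fun g : G => β' (g : G ⧸ N)) →
      ∃ a : A, (∀ n ∈ N, n • a = a) ∧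
        ∀ g : G, β' ((g : G ⧸ N)) = a⁻¹ * ᾱ ((g : G ⧸ N)) * g • a) ∧
    -- ker Res¹ = Im Inf¹
    (∀ α : G → A, IsContDeriv α →
      ((∃ a : A, ∀ n ∈ N, α n = a⁻¹ * n • a) ↔
        ∃ ᾱ : G ⧸ N → A, IsQuotDeriv N ᾱ ∧ Cohom (fun g : G => ᾱ (g : G ⧸ N)) α)) := by
  refine ⟨fun ᾱ β' hᾱ hβ' ⟨a, ha⟩ => ⟨a, fun n hn => ?_, ha⟩, fun α hα => ⟨?_, ?_⟩⟩
  · have h : β' n = a⁻¹ * ᾱ n * n • a := ha n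
    rw [hᾱ.map_of_mem hn, hβ'.map_of_mem hn, mul_one, eq_comm, inv_mul_eq_one] at h
    exact h.symm
  · rintro ⟨a, ha⟩
    have hN : ∀ n ∈ N, a * α n * n • a⁻¹ = 1 := fun n hn => by
      rw [ha n hn, smul_inv']; group
    obtain ⟨ᾱ, hᾱ, hlift⟩ := exists_isQuotDeriv_of_eq_one (hα.twist a) hN
    exact ⟨ᾱ, hᾱ, by simpa only [hlift] using cohom_twist α a⟩
  · rintro ⟨ᾱ, hᾱ, a, ha⟩
    exact ⟨a, fun n hn => by simpa only [hᾱ.map_of_mem hn, mul_one] using ha n⟩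

/-- The inflation–restriction exact sequence
`1 → H¹(G/N, A^N) →Inf¹ H¹(G,A) →Res¹ H¹(N,A)`:
`Inf¹` is injective (cohomologous inflations are cohomologous already over `G/N`, i.e.
via a witness in `A^N`), and the kernel of `Res¹` equals the image of `Inf¹`. -/
theorem inflation_restriction_exact {G A : Type*}
    [Group G] [TopologicalSpace G] [IsTopologicalGroup G]
    [Group A] [TopologicalSpace A] [IsTopologicalGroup A]
    [MulDistribMulAction G A] [ContinuousSMul G A]
    (N : Subgroup G) [N.Normal] :
    -- injectivity of Inf¹
    (∀ ᾱ β' : G ⧸ N → A, IsQuotDeriv N ᾱ → IsQuotDeriv N β' →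
      Cohom (fun g : G => ᾱ (g : G ⧸ N)) (fun g : G => β' (g : G ⧸ N)) →
      ∃ a : A, (∀ n ∈ N, n • a = a) ∧
        ∀ g : G, β' ((g : G ⧸ N)) = a⁻¹ * ᾱ ((g : G ⧸ N)) * g • a) ∧
    -- ker Res¹ = Im Inf¹
    (∀ α : G → A, IsContDeriv α →
      ((∃ a : A, ∀ n ∈ N, α n = a⁻¹ * n • a) ↔
        ∃ ᾱ : G ⧸ N → A, IsQuotDeriv N ᾱ ∧ Cohom (fun g : G => ᾱ (g : G ⧸ N)) α)) :=
  inflation_restriction_exact_general N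
end
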